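/- arXiv:1803.06394 — 3 statements merged into one kernel-verified Lean document; each statement's English description precedes it below -/
import Mathlib

section
/- For every positive integer n, the number of partitions of n in which exactly one part value is repeated (appears with multiplicity at least 2) while all other part values appear exactly once, equals the difference between the total number of parts in all partitions of n into odd parts and the total number of parts in all partitions of n into distinct parts. -/
/-!
Write `q m` for the number of partitions of `m` into distinct parts; by Euler it is also the
number of partitions of `m` into odd parts. All three quantities are sums `∑ w(v, k) q(n - vk)`
over pairs of positive integers with `vk ≤ n`:
* counting the parts of an odd partition as pairs `(v, k)` with `k ≤ mult v`, the partitions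
  with `mult v ≥ k` lose `k` copies of `v` and become arbitrary odd partitions of `n - vk`, so
  the odd-parts total has weight `[v odd]`;
* a partition whose only repeated value `j` has multiplicity `2k` or `2k + 1` loses `2k` copies
  of `j` and becomes a distinct partition of `n - 2jk`, so `c(n)` has weight `[v even]`;
* the number `D(m)` of distinct partitions of `m` containing `v` satisfies
  `D(m + v) + D(m) = q(m)`, whence `D(n) = ∑ₖ (-1)^(k+1) q(n - vk)` and the distinct-parts total
  has weight `(-1)^(k+1)`.
The sum is symmetric in `v` and `k`, and `[k even] = [k odd] - (-1)^(k+1)`.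
-/

open Finset

theorem Multiset.card_toFinset_filter_two_le_count_eq_one_iff {α : Type*} [DecidableEq α]
    (s : Multiset α) :
    #(s.toFinset.filter fun a => 2 ≤ s.count a) = 1 ↔
      ∃ j, 2 ≤ s.count j ∧ ∀ i ≠ j, s.count i ≤ 1 := by
  simp only [Finset.card_eq_one, eq_singleton_iff_unique_mem, Finset.mem_filter, mem_toFinset]
  refine exists_congr fun j => ⟨fun ⟨⟨_, hj⟩, h⟩ => ⟨hj, fun i hi => ?_⟩,
    fun ⟨hj, h⟩ => ⟨⟨count_pos.1 (by omega), hj⟩, fun i ⟨_, hi⟩ => ?_⟩⟩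
  · by_contra hc
    exact hi (h i ⟨count_pos.1 (by omega), by omega⟩)
  · by_contra hc
    have := h i hc
    omega

theorem Multiset.replicate_le_and_nodup_tsub_iff {α : Type*} [DecidableEq α] (s : Multiset α)
    (r : ℕ) (j : α) :
    replicate r j ≤ s ∧ (s - replicate r j).Nodup ↔
      r ≤ s.count j ∧ s.count j ≤ r + 1 ∧ ∀ i ≠ j, s.count i ≤ 1 := by
  rw [← le_count_iff_replicate_le, nodup_iff_count_le_one]
  simp only [count_sub, count_replicate]
  constructor
  · rintro ⟨hr, h⟩
    refine ⟨hr, by simpa [add_comm] using h j, fun i hi => by simpa [Ne.symm hi] using h i⟩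
  · rintro ⟨hr, hj, h⟩
    refine ⟨hr, fun i => ?_⟩
    split_ifs with hji
    · subst hji; omega
    · simpa using h i (Ne.symm hji)

def mulLePairs (n : ℕ) : Finset (ℕ × ℕ) :=
  (Icc 1 n ×ˢ Icc 1 n).filter fun p => p.1 * p.2 ≤ n

theorem mem_mulLePairs {n : ℕ} {p : ℕ × ℕ} :
    p ∈ mulLePairs n ↔ 1 ≤ p.1 ∧ 1 ≤ p.2 ∧ p.1 * p.2 ≤ n := by
  simp only [mulLePairs, mem_filter, mem_product, mem_Icc]
  constructor
  · rintro ⟨⟨⟨h1, -⟩, h2, -⟩, h⟩; exact ⟨h1, h2, h⟩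
  · rintro ⟨h1, h2, h⟩
    exact ⟨⟨⟨h1, by nlinarith⟩, h2, by nlinarith⟩, h⟩

theorem sum_mulLePairs {M : Type*} [AddCommMonoid M] (n : ℕ) (f : ℕ × ℕ → M) :
    ∑ p ∈ mulLePairs n, f p = ∑ v ∈ Icc 1 n, ∑ k ∈ range (n / v), f (v, k + 1) := by
  rw [mulLePairs, sum_filter, sum_product]
  refine sum_congr rfl fun v hv => ?_
  have hv : 0 < v := (mem_Icc.1 hv).1
  rw [← sum_filter, range_eq_Ico, sum_Ico_add' (fun k => f (v, k))]
  refine sum_congr (ext fun k => ?_) fun _ _ => rfl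
  simp only [mem_filter, mem_Icc, mem_Ico, zero_add, Nat.lt_succ_iff, Nat.le_div_iff_mul_le hv]
  constructor
  · rintro ⟨⟨h1, -⟩, h⟩; exact ⟨h1, by rwa [mul_comm]⟩
  · rintro ⟨h1, h⟩; exact ⟨⟨h1, by nlinarith⟩, by rwa [mul_comm]⟩

theorem sum_mulLePairs_comm {M : Type*} [AddCommMonoid M] (n : ℕ) (f : ℕ → ℕ → ℕ → M) :
    ∑ p ∈ mulLePairs n, f p.2 p.1 (p.1 * p.2) = ∑ p ∈ mulLePairs n, f p.1 p.2 (p.1 * p.2) :=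
  sum_nbij' Prod.swap Prod.swap (by simp [mem_mulLePairs, mul_comm, and_left_comm])
    (by simp [mem_mulLePairs, mul_comm, and_left_comm]) (by simp) (by simp) (by simp [mul_comm])

namespace Nat.Partition

variable {m n : ℕ}

@[simps]
def addReplicate (Q : m.Partition) {v : ℕ} (hv : 0 < v) (k : ℕ) (h : m + v * k = n) :
    n.Partition where
  parts := Q.parts + Multiset.replicate k v
  parts_pos hi := by
    rcases Multiset.mem_add.1 hi with hi | hi
    · exact Q.parts_pos hi
    · rwa [Multiset.eq_of_mem_replicate hi]
  parts_sum := by simp [Multiset.sum_replicate, Q.parts_sum, ← h, mul_comm]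

@[simps]
def subReplicate (P : n.Partition) {v k : ℕ} (hle : Multiset.replicate k v ≤ P.parts)
    (h : m + v * k = n) : m.Partition where
  parts := P.parts - Multiset.replicate k v
  parts_pos hi := P.parts_pos (Multiset.mem_of_le tsub_le_self hi)
  parts_sum := by
    have := congrArg Multiset.sum (tsub_add_cancel_of_le hle)
    simp only [Multiset.sum_add, Multiset.sum_replicate, smul_eq_mul, P.parts_sum] at this
    lia

theorem card_eq_card_of_parts_eq_add_replicate {s : Finset n.Partition} {t : Finset m.Partition}
    {v k : ℕ} (hv : 0 < v) (h : m + v * k = n) (hs : ∀ P ∈ s, Multiset.replicate k v ≤ P.parts)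
    (hst : ∀ (P : n.Partition) (Q : m.Partition),
      P.parts = Q.parts + Multiset.replicate k v → (P ∈ s ↔ Q ∈ t)) :
    #s = #t := by
  refine card_bij' (fun P hP => subReplicate P (hs P hP) h) (fun Q _ => addReplicate Q hv k h)
    (fun P hP => ?_) (fun Q hQ => (hst _ Q rfl).2 hQ) (fun P hP => ?_) (fun Q _ => ?_)
  · exact (hst P _ (tsub_add_cancel_of_le (hs P hP)).symm).1 hP
  · ext1; exact tsub_add_cancel_of_le (hs P hP)
  · ext1; exact add_tsub_cancel_right _ _

theorem mul_count_le (P : n.Partition) (v : ℕ) : v * P.parts.count v ≤ n := by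
  obtain ⟨s, hs⟩ := Multiset.le_iff_exists_add.1
    (Multiset.le_count_iff_replicate_le.1 le_rfl : Multiset.replicate (P.parts.count v) v ≤ P.parts)
  have := congrArg Multiset.sum hs
  simp only [P.parts_sum, Multiset.sum_add, Multiset.sum_replicate, smul_eq_mul] at this
  lia

theorem card_parts_eq_sum_count (P : n.Partition) :
    Multiset.card P.parts = ∑ v ∈ Icc 1 n, P.parts.count v :=
  (Multiset.sum_count_eq_card fun _ hv => mem_Icc.2 ⟨P.parts_pos hv, le_of_mem_parts hv⟩).symm

theorem count_eq_card_filter_range (P : n.Partition) {v : ℕ} (hv : 0 < v) :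
    P.parts.count v = #{k ∈ range (n / v) | k + 1 ≤ P.parts.count v} := by
  have hle : P.parts.count v ≤ n / v :=
    (Nat.le_div_iff_mul_le hv).2 (by rw [mul_comm]; exact mul_count_le P v)
  rw [show {k ∈ range (n / v) | k + 1 ≤ P.parts.count v} = range (P.parts.count v) from
    ext fun k => by simp only [mem_filter, mem_range]; omega, card_range]

theorem sum_card_parts_eq_sum_card_filter (s : Finset n.Partition) :
    ∑ P ∈ s, Multiset.card P.parts = ∑ p ∈ mulLePairs n, #{P ∈ s | p.2 ≤ P.parts.count p.1} := by
  calc ∑ P ∈ s, Multiset.card P.parts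
      = ∑ P ∈ s, ∑ p ∈ mulLePairs n, if p.2 ≤ P.parts.count p.1 then 1 else 0 := by
        refine sum_congr rfl fun P _ => ?_
        rw [sum_mulLePairs, card_parts_eq_sum_count]
        exact sum_congr rfl fun v hv => by
          rw [count_eq_card_filter_range P (mem_Icc.1 hv).1, card_filter]
    _ = _ := by rw [sum_comm]; simp only [sum_boole, Nat.cast_id]

theorem card_odds_filter_le_count {v k : ℕ} (hk : 0 < k) (hvk : v * k ≤ n) :
    #{P ∈ odds n | k ≤ P.parts.count v} = if Odd v then #(odds (n - v * k)) else 0 := by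
  split_ifs with hv
  · refine card_eq_card_of_parts_eq_add_replicate hv.pos (Nat.sub_add_cancel hvk)
      (fun P hP => Multiset.le_count_iff_replicate_le.1 (mem_filter.1 hP).2) fun P Q hPQ => ?_
    simp [odds, restricted, hPQ, or_imp, forall_and, Multiset.mem_replicate, hv]
  · refine Finset.card_eq_zero.2 (filter_eq_empty_iff.2 fun P hP hle => ?_)
    exact (mem_filter.1 hP).2 v (Multiset.count_pos.1 (by omega)) (Nat.not_odd_iff_even.1 hv)

theorem sum_card_parts_odds (n : ℕ) :
    ∑ P ∈ odds n, Multiset.card P.parts =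
      ∑ p ∈ mulLePairs n, if Odd p.1 then #(distincts (n - p.1 * p.2)) else 0 := by
  rw [sum_card_parts_eq_sum_card_filter]
  refine sum_congr rfl fun p hp => ?_
  obtain ⟨-, hk, hvk⟩ := mem_mulLePairs.1 hp
  rw [card_odds_filter_le_count hk hvk, card_odds_eq_card_distincts]

theorem card_distincts_filter_mem_add {v : ℕ} (hv : 0 < v) (m : ℕ) :
    #{Q ∈ distincts (m + v) | v ∈ Q.parts} + #{Q ∈ distincts m | v ∈ Q.parts} =
      #(distincts m) := by
  rw [card_eq_card_of_parts_eq_add_replicate (t := {Q ∈ distincts m | v ∉ Q.parts}) (k := 1) hv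
    (by rw [mul_one]) (fun P hP => by simpa using (mem_filter.1 hP).2) fun P Q hPQ => ?_]
  · rw [add_comm]; exact card_filter_add_card_filter_not _
  · simp [distincts, hPQ, Multiset.nodup_add, and_comm]

theorem card_distincts_filter_mem {v : ℕ} (hv : 0 < v) (m : ℕ) :
    (#{Q ∈ distincts m | v ∈ Q.parts} : ℤ) =
      ∑ k ∈ range (m / v), (-1) ^ k * (#(distincts (m - v * (k + 1))) : ℤ) := by
  induction m using Nat.strong_induction_on with
  | _ m ih =>
  rcases lt_or_ge m v with hmv | hvm
  · rw [Nat.div_eq_of_lt hmv, range_zero, sum_empty, Nat.cast_eq_zero, Finset.card_eq_zero,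
      filter_eq_empty_iff]
    exact fun Q _ hQ => absurd (le_of_mem_parts hQ) (by omega)
  · obtain ⟨m, rfl⟩ := Nat.exists_eq_add_of_le' hvm
    have hrec : (#{Q ∈ distincts (m + v) | v ∈ Q.parts} : ℤ) =
        #(distincts m) - #{Q ∈ distincts m | v ∈ Q.parts} := by
      rw [← card_distincts_filter_mem_add hv m]; push_cast; ring
    have hshift (k : ℕ) : m + v - v * (k + 1 + 1) = m - v * (k + 1) := by
      rw [mul_add v (k + 1) 1]; omega
    rw [hrec, ih m (by omega), Nat.add_div_right m hv, sum_range_succ', zero_add, mul_one,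
      Nat.add_sub_cancel, pow_zero, one_mul, sub_eq_neg_add, ← sum_neg_distrib]
    exact congrArg (· + _) (sum_congr rfl fun k _ => by rw [hshift, pow_succ]; ring)

theorem sum_card_parts_distincts (n : ℕ) :
    ∑ P ∈ distincts n, (Multiset.card P.parts : ℤ) =
      ∑ p ∈ mulLePairs n, (-1) ^ (p.2 + 1) * (#(distincts (n - p.1 * p.2)) : ℤ) := by
  have hcount : ∑ P ∈ distincts n, Multiset.card P.parts =
      ∑ v ∈ Icc 1 n, #{Q ∈ distincts n | v ∈ Q.parts} := by
    calc ∑ P ∈ distincts n, Multiset.card P.parts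
        = ∑ P ∈ distincts n, ∑ v ∈ Icc 1 n, if v ∈ P.parts then 1 else 0 :=
          sum_congr rfl fun P hP => by
            rw [card_parts_eq_sum_count]
            exact sum_congr rfl fun v _ => Multiset.count_eq_of_nodup (mem_filter.1 hP).2
      _ = _ := by rw [sum_comm]; simp only [sum_boole, Nat.cast_id]
  calc ∑ P ∈ distincts n, (Multiset.card P.parts : ℤ)
      = ∑ v ∈ Icc 1 n, (#{Q ∈ distincts n | v ∈ Q.parts} : ℤ) := by exact_mod_cast hcount
    _ = ∑ v ∈ Icc 1 n, ∑ k ∈ range (n / v), (-1) ^ k * (#(distincts (n - v * (k + 1))) : ℤ) :=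
      sum_congr rfl fun v hv => card_distincts_filter_mem (mem_Icc.1 hv).1 n
    _ = _ := by
      rw [sum_mulLePairs]
      exact sum_congr rfl fun v _ => sum_congr rfl fun k _ => by ring

theorem card_filter_replicate_le_nodup_tsub {j r : ℕ} (hj : 0 < j) (h : m + j * r = n) :
    #{P : n.Partition | Multiset.replicate r j ≤ P.parts ∧
      (P.parts - Multiset.replicate r j).Nodup} = #(distincts m) :=
  card_eq_card_of_parts_eq_add_replicate hj h (fun _ hP => (mem_filter.1 hP).2.1)
    fun P Q hPQ => by simp [distincts, hPQ]

def repeatedFiber (n : ℕ) (p : ℕ × ℕ) : Finset n.Partition :=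
  {P | Multiset.replicate (2 * p.2) (p.1 / 2) ≤ P.parts ∧
    (P.parts - Multiset.replicate (2 * p.2) (p.1 / 2)).Nodup}

theorem mem_repeatedFiber {p : ℕ × ℕ} {P : n.Partition} : P ∈ repeatedFiber n p ↔
    2 * p.2 ≤ P.parts.count (p.1 / 2) ∧ P.parts.count (p.1 / 2) ≤ 2 * p.2 + 1 ∧
      ∀ i ≠ p.1 / 2, P.parts.count i ≤ 1 := by
  simp only [repeatedFiber, mem_filter, mem_univ, true_and,
    Multiset.replicate_le_and_nodup_tsub_iff]

theorem filter_card_repeated_eq_one_eq_biUnion (n : ℕ) :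
    (univ.filter fun P : n.Partition =>
      #(P.parts.toFinset.filter fun p => 2 ≤ P.parts.count p) = 1) =
      {p ∈ mulLePairs n | Even p.1}.biUnion (repeatedFiber n) := by
  ext P
  simp only [mem_filter, mem_univ, true_and, Multiset.card_toFinset_filter_two_le_count_eq_one_iff,
    mem_biUnion, mem_repeatedFiber, mem_mulLePairs]
  constructor
  · rintro ⟨j, hj, hi⟩
    have hjpos : 0 < j := P.parts_pos (Multiset.count_pos.1 (by omega))
    have hjn := mul_count_le P j
    have hj2 : 2 * j / 2 = j := by omega
    refine ⟨(2 * j, P.parts.count j / 2), ⟨⟨by omega, by omega, ?_⟩, even_two_mul j⟩, ?_⟩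
    · nlinarith [Nat.mul_div_le (P.parts.count j) 2]
    · simp only [hj2]
      exact ⟨by omega, by omega, hi⟩
  · rintro ⟨p, ⟨⟨-, hk, -⟩, -⟩, hc, -, hi⟩
    exact ⟨p.1 / 2, by omega, hi⟩

theorem pairwiseDisjoint_repeatedFiber (n : ℕ) :
    (({p ∈ mulLePairs n | Even p.1} : Finset (ℕ × ℕ)) : Set (ℕ × ℕ)).PairwiseDisjoint
      (repeatedFiber n) := by
  intro p hp p' hp' hne
  simp only [mem_coe, mem_filter, mem_mulLePairs] at hp hp'
  obtain ⟨⟨-, hk, -⟩, a, ha⟩ := hp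
  obtain ⟨⟨-, hk', -⟩, a', ha'⟩ := hp'
  refine disjoint_left.2 fun P hP hP' => hne ?_
  obtain ⟨hc, hc', -⟩ := mem_repeatedFiber.1 hP
  obtain ⟨hd, hd', hi'⟩ := mem_repeatedFiber.1 hP'
  have hj : p.1 / 2 = p'.1 / 2 := by
    by_contra h
    have := hi' _ h
    omega
  rw [hj] at hc hc'
  exact Prod.ext (by omega) (by omega)

theorem card_repeatedFiber {p : ℕ × ℕ} (hp : p ∈ mulLePairs n) (he : Even p.1) :
    #(repeatedFiber n p) = #(distincts (n - p.1 * p.2)) := by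
  obtain ⟨a, ha⟩ := he
  obtain ⟨h1, -, hn⟩ := mem_mulLePairs.1 hp
  have hhalf : p.1 / 2 = a := by omega
  refine card_filter_replicate_le_nodup_tsub (by omega) ?_
  rw [hhalf, show a * (2 * p.2) = p.1 * p.2 by rw [ha]; ring]
  omega

theorem card_filter_card_repeated_eq_one (n : ℕ) :
    #(univ.filter fun P : n.Partition =>
        #(P.parts.toFinset.filter fun p => 2 ≤ P.parts.count p) = 1) =
      ∑ p ∈ mulLePairs n, if Even p.1 then #(distincts (n - p.1 * p.2)) else 0 := by
  rw [filter_card_repeated_eq_one_eq_biUnion, card_biUnion (pairwiseDisjoint_repeatedFiber n),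
    sum_filter]
  exact sum_congr rfl fun p hp => by split_ifs with he; exacts [card_repeatedFiber hp he, rfl]

end Nat.Partition

open Nat.Partition

theorem andrews_c_eq_b_general (n : ℕ) :
    ((Finset.univ.filter (fun P : n.Partition =>
        (P.parts.toFinset.filter (fun p => 2 ≤ P.parts.count p)).card = 1)).card : ℤ) =
      (∑ P ∈ Nat.Partition.odds n, (Multiset.card P.parts : ℤ)) -
        ∑ P ∈ Nat.Partition.distincts n, (Multiset.card P.parts : ℤ) := by
  rw [← Nat.cast_sum, sum_card_parts_odds, card_filter_card_repeated_eq_one,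
    sum_card_parts_distincts]
  push_cast
  rw [← sum_mulLePairs_comm n fun v _ m => if Even v then (#(distincts (n - m)) : ℤ) else 0,
    ← sum_mulLePairs_comm n fun v _ m => if Odd v then (#(distincts (n - m)) : ℤ) else 0,
    ← sum_sub_distrib]
  refine sum_congr rfl fun p _ => ?_
  rcases Nat.even_or_odd p.2 with h | h
  · simp [h, Nat.not_odd_iff_even.2 h, pow_succ, h.neg_one_pow]
  · simp [h, Nat.not_even_iff_odd.2 h, pow_succ, h.neg_one_pow]

theorem andrews_c_eq_b (n : ℕ) (hn : 0 < n) :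
    ((Finset.univ.filter (fun P : n.Partition =>
        (P.parts.toFinset.filter (fun p => 2 ≤ P.parts.count p)).card = 1)).card : ℤ) =
      (∑ P ∈ Nat.Partition.odds n, (Multiset.card P.parts : ℤ)) -
        ∑ P ∈ Nat.Partition.distincts n, (Multiset.card P.parts : ℤ) :=
  andrews_c_eq_b_general n
end

section
/- For every positive integer n, the difference b1(n) between the total number of parts in all partitions of n into distinct parts and the total number of distinct part values in all partitions of n into odd parts equals the number of overpartitions of n into distinct parts in which exactly one part is overlined, where a part 2^s·m (m odd, s ≥ 0) may be overlined only if some part 2^t·m with t < s also appears. -/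
/-!
Glaisher's map sends a partition `P` into distinct parts to the partition into odd parts obtained
by splitting each part `2 ^ s * m` (`m` odd) into `2 ^ s` copies of `m`. It is injective on
distinct partitions, because binary expansions are unique, hence bijective onto odd partitions by
Euler's theorem. The distinct values of the image of `P` are the odd parts `m` occurring in `P`,
and each such `m` accounts for exactly one non-overlinable part of `P`, namely the smallest part
`2 ^ t * m`; all the other parts of `P` can be overlined.
-/

open Finset

theorem Nat.eq_of_factorization_eq_of_ordCompl_eq {r a b : ℕ}
    (hv : a.factorization r = b.factorization r) (hc : ordCompl[r] a = ordCompl[r] b) : a = b := by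
  rw [← ordProj_mul_ordCompl_eq_self a r, hc, hv, ordProj_mul_ordCompl_eq_self]

theorem Nat.testBit_sum_two_pow (s : Finset ℕ) (i : ℕ) :
    (∑ j ∈ s, 2 ^ j).testBit i ↔ i ∈ s := by
  rw [← mem_bitIndices, ← List.mem_toFinset, toFinset_bitIndices_sum_two_pow]

theorem Finset.card_filter_exists_lt_add_card_image {α β : Type*} [LinearOrder α]
    [DecidableEq β] (s : Finset α) (f : α → β) :
    #(s.filter fun a => ∃ b ∈ s, f b = f a ∧ b < a) + #(s.image f) = #s := by
  set minima := s.filter fun a => ¬ ∃ b ∈ s, f b = f a ∧ b < a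
  have hinj : Set.InjOn f minima := by
    intro a ha b hb hab
    simp only [minima, mem_coe, mem_filter, not_exists, not_and] at ha hb
    by_contra hne
    rcases lt_or_gt_of_ne hne with h | h
    · exact hb.2 a ha.1 hab h
    · exact ha.2 b hb.1 hab.symm h
  have himage : minima.image f = s.image f := by
    refine Subset.antisymm (image_subset_image (filter_subset _ _)) ?_
    intro _ hx
    obtain ⟨a, ha, rfl⟩ := mem_image.1 hx
    obtain ⟨b, hb, hmin⟩ :=
      (s.filter (f · = f a)).exists_min_image id ⟨a, mem_filter.2 ⟨ha, rfl⟩⟩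
    rw [mem_filter] at hb
    refine mem_image.2 ⟨b, mem_filter.2 ⟨hb.1, ?_⟩, hb.2⟩
    rintro ⟨c, hc, hcb, hlt⟩
    exact (hmin c (mem_filter.2 ⟨hc, hcb.trans hb.2⟩)).not_gt hlt
  rw [← himage, card_image_of_injOn hinj, card_filter_add_card_filter_not]

namespace Nat.Partition

variable {n : ℕ}

def glaisher (P : n.Partition) : n.Partition where
  parts := P.parts.bind fun p => Multiset.replicate (2 ^ p.factorization 2) (ordCompl[2] p)
  parts_pos {m} hm := by
    obtain ⟨p, hp, hm⟩ := Multiset.mem_bind.1 hm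
    rw [Multiset.eq_of_mem_replicate hm]
    exact ordCompl_pos 2 (P.parts_pos hp).ne'
  parts_sum := by
    simp_rw [Multiset.sum_bind, Multiset.sum_replicate, smul_eq_mul,
      ordProj_mul_ordCompl_eq_self, Multiset.map_id', P.parts_sum]

theorem mem_glaisher_parts {P : n.Partition} {m : ℕ} :
    m ∈ (glaisher P).parts ↔ ∃ p ∈ P.parts, ordCompl[2] p = m := by
  simp [glaisher, Multiset.mem_replicate, eq_comm]

theorem toFinset_glaisher_parts (P : n.Partition) :
    (glaisher P).parts.toFinset = P.parts.toFinset.image (ordCompl[2] ·) := by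
  ext m
  simp [mem_glaisher_parts]

theorem glaisher_mem_odds (P : n.Partition) : glaisher P ∈ odds n := by
  refine mem_filter.2 ⟨mem_univ _, fun m hm => ?_⟩
  obtain ⟨p, hp, rfl⟩ := mem_glaisher_parts.1 hm
  rw [even_iff_two_dvd]
  exact not_dvd_ordCompl prime_two (P.parts_pos hp).ne'

theorem count_glaisher_parts {P : n.Partition} (hP : P.parts.Nodup) (m : ℕ) :
    (glaisher P).parts.count m =
      ∑ p ∈ P.parts.toFinset with ordCompl[2] p = m, 2 ^ p.factorization 2 := by
  rw [sum_filter, sum_eq_multiset_sum, Multiset.toFinset_val, hP.dedup, glaisher,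
    Multiset.count_bind]
  simp_rw [Multiset.count_replicate]

/-- For distinct parts, the multiplicity of `m` in `glaisher P` is `∑ 2 ^ s` over the parts
`2 ^ s * m` of `P`: its binary digits recover `P`. -/
theorem mem_parts_iff_testBit_count_glaisher_parts {P : n.Partition} (hP : P.parts.Nodup)
    (a : ℕ) :
    a ∈ P.parts ↔ ((glaisher P).parts.count (ordCompl[2] a)).testBit (a.factorization 2) := by
  set fibre := P.parts.toFinset.filter (ordCompl[2] · = ordCompl[2] a)
  have hinj : Set.InjOn (fun p : ℕ => p.factorization 2) fibre := fun p hp q hq hpq =>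
    eq_of_factorization_eq_of_ordCompl_eq hpq ((mem_filter.1 hp).2.trans (mem_filter.1 hq).2.symm)
  rw [count_glaisher_parts hP, ← sum_image hinj, testBit_sum_two_pow]
  simp only [fibre, mem_image, mem_filter, Multiset.mem_toFinset]
  exact ⟨fun ha => ⟨a, ⟨ha, rfl⟩, rfl⟩,
    fun ⟨p, ⟨hp, hc⟩, hv⟩ => eq_of_factorization_eq_of_ordCompl_eq hv hc ▸ hp⟩

theorem glaisher_injOn : Set.InjOn glaisher (distincts n : Set n.Partition) := by
  intro P hP Q hQ h
  have hP' : P.parts.Nodup := (mem_filter.1 hP).2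
  have hQ' : Q.parts.Nodup := (mem_filter.1 hQ).2
  ext1
  refine (hP'.ext hQ').2 fun a => ?_
  rw [mem_parts_iff_testBit_count_glaisher_parts hP',
    mem_parts_iff_testBit_count_glaisher_parts hQ', h]

theorem sum_odds_eq_sum_distincts_glaisher {M : Type*} [AddCommMonoid M] (f : n.Partition → M) :
    ∑ Q ∈ odds n, f Q = ∑ P ∈ distincts n, f (glaisher P) := by
  have hmaps : Set.MapsTo glaisher (distincts n : Set n.Partition) (odds n) :=
    fun P _ => glaisher_mem_odds P
  have hsurj := surjOn_of_injOn_of_card_le _ hmaps glaisher_injOn (card_odds_eq_card_distincts n).le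
  exact (sum_nbij glaisher hmaps glaisher_injOn hsurj fun _ _ => rfl).symm

end Nat.Partition

theorem b1_eq_overpartitions_general (n : ℕ) :
    (∑ P ∈ Nat.Partition.distincts n, (Multiset.card P.parts : ℤ)) -
        (∑ P ∈ Nat.Partition.odds n, (P.parts.toFinset.card : ℤ)) =
      ∑ P ∈ Nat.Partition.distincts n,
        ((P.parts.toFinset.filter (fun p =>
          ∃ q ∈ P.parts.toFinset, ordCompl[2] q = ordCompl[2] p ∧ q < p)).card : ℤ) := by
  rw [Nat.Partition.sum_odds_eq_sum_distincts_glaisher, ← sum_sub_distrib]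
  refine sum_congr rfl fun P hP => ?_
  rw [Nat.Partition.toFinset_glaisher_parts,
    ← Multiset.toFinset_card_of_nodup (mem_filter.1 hP).2,
    ← card_filter_exists_lt_add_card_image P.parts.toFinset (ordCompl[2] ·)]
  push_cast
  ring

theorem b1_eq_overpartitions (n : ℕ) (hn : 0 < n) :
    (∑ P ∈ Nat.Partition.distincts n, (Multiset.card P.parts : ℤ)) -
        (∑ P ∈ Nat.Partition.odds n, (P.parts.toFinset.card : ℤ)) =
      ∑ P ∈ Nat.Partition.distincts n,
        ((P.parts.toFinset.filter (fun p =>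
          ∃ q ∈ P.parts.toFinset, ordCompl[2] q = ordCompl[2] p ∧ q < p)).card : ℤ) :=
  b1_eq_overpartitions_general n
end

section
/- For every positive integer n, the number of partitions of n in which exactly one part value appears exactly twice and all other part values appear exactly once equals the number of zeros appearing in the binary representations of the multiplicities of all parts over all partitions of n into odd parts. -/
/-!
Write every positive integer as `2 ^ a * k` with `k` odd. Glaisher's bijection turns a partition
into distinct parts into the odd partition in which `k` has multiplicity `∑ 2 ^ a` over its parts
`2 ^ a * k`; conversely, the parts are read off the binary digits of the multiplicities.

A partition in which only `p = 2 ^ j * k` repeats, exactly twice, is `p` added to a partition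
into distinct parts that contains `p`. The Glaisher image of the latter is an odd partition in
which the multiplicity of `k` has digit `1` at position `j`; adding the `2 ^ j` copies of `k` into
which `p` splits turns this digit into a `0` that is not the leading digit. Conversely, removing
`2 ^ j` copies of `k` turns a non-leading zero digit at position `j` of its multiplicity into a `1`.
-/

open Finset

theorem List.count_false_eq_card_filter_range (L : List Bool) :
    L.count false = #{j ∈ Finset.range L.length | L.getI j = false} := by
  induction L with
  | nil => simp
  | cons b L ih =>
    rw [card_filter, List.length_cons, Finset.sum_range_succ', List.count_cons, ih, card_filter]
    cases b <;> rfl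

namespace Nat

def zeroBits (m : ℕ) : Finset ℕ := {j ∈ range m.size | m.testBit j = false}

theorem card_zeroBits (m : ℕ) : #m.zeroBits = (digits 2 m).count 0 := by
  have hinj : Function.Injective fun b : Bool => cond b 1 0 := by decide
  have hcount : (digits 2 m).count 0 = m.bits.count false := by
    rw [digits_two_eq_bits]
    exact List.count_map_of_injective _ _ hinj false
  rw [hcount, List.count_false_eq_card_filter_range, size_eq_bits_len, zeroBits]
  simp only [testBit_eq_inth]

theorem mem_zeroBits_iff {m j : ℕ} : j ∈ m.zeroBits ↔ 2 ^ j ≤ m ∧ (m - 2 ^ j).testBit j := by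
  rw [zeroBits, mem_filter, mem_range, lt_size]
  refine and_congr_right fun hj => ?_
  have h := testBit_two_pow_add_eq (m - 2 ^ j) j
  rw [Nat.add_sub_cancel' hj] at h
  simp [h]

theorem factorization_two_pow_mul_of_odd {k : ℕ} (hk : Odd k) (a : ℕ) :
    (2 ^ a * k).factorization 2 = a := by
  rw [factorization_mul (by positivity) (by rintro rfl; simp at hk),
    Finsupp.add_apply, Prime.factorization_pow prime_two,
    factorization_eq_zero_of_not_dvd hk.not_two_dvd_nat]
  simp

theorem ordCompl_two_pow_mul_of_odd {k : ℕ} (hk : Odd k) (a : ℕ) : ordCompl[2] (2 ^ a * k) = k :=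
  ordCompl_pow_mul_of_not_dvd a prime_two hk.not_two_dvd_nat

theorem two_pow_mul_inj_of_odd {a b k l : ℕ} (hk : Odd k) (hl : Odd l)
    (h : 2 ^ a * k = 2 ^ b * l) : a = b ∧ k = l := by
  refine ⟨?_, ?_⟩
  · simpa [factorization_two_pow_mul_of_odd, hk, hl] using congrArg (·.factorization 2) h
  · simpa [ordCompl_two_pow_mul_of_odd, hk, hl] using congrArg (ordCompl[2] ·) h

theorem odd_ordCompl_two {q : ℕ} (hq : q ≠ 0) : Odd (ordCompl[2] q) :=
  odd_iff.mpr (two_dvd_ne_zero.mp (not_dvd_ordCompl prime_two hq))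

end Nat

namespace Multiset

def IsDoubledPart {α : Type*} (t : Multiset α) (p : α) : Prop :=
  ∃ u : Multiset α, u.Nodup ∧ p ∈ u ∧ t = p ::ₘ u

section IsDoubledPart

variable {α : Type*} [DecidableEq α] {t : Multiset α} {p p' : α}

theorem IsDoubledPart.unique (h : IsDoubledPart t p) (h' : IsDoubledPart t p') : p = p' := by
  obtain ⟨u, hu, hp, rfl⟩ := h
  obtain ⟨u', hu', -, ht⟩ := h'
  by_contra hne
  have h2 : (p ::ₘ u).count p = 2 := by
    rw [count_cons_self, count_eq_one_of_mem hu hp]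
  have h1 : (p' ::ₘ u').count p ≤ 1 := by
    rw [count_cons_of_ne hne]
    exact nodup_iff_count_le_one.mp hu' p
  rw [ht] at h2
  omega

theorem exists_isDoubledPart_iff :
    (∃ p ∈ t.toFinset, t.count p = 2 ∧ ∀ q ∈ t.toFinset, q ≠ p → t.count q = 1) ↔
      ∃ p, IsDoubledPart t p := by
  constructor
  · rintro ⟨p, hp, h2, h1⟩
    refine ⟨p, t.erase p, nodup_iff_count_le_one.mpr fun q => ?_, ?_,
      (cons_erase (mem_toFinset.mp hp)).symm⟩
    · rcases eq_or_ne q p with rfl | hne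
      · rw [count_erase_self, h2]
      · rw [count_erase_of_ne hne]
        by_cases hq : q ∈ t
        · exact (h1 q (mem_toFinset.mpr hq) hne).le
        · rw [count_eq_zero.mpr hq]; omega
    · rw [← count_pos, count_erase_self, h2]
      omega
  · rintro ⟨p, u, hu, hp, rfl⟩
    refine ⟨p, by simp, by rw [count_cons_self, count_eq_one_of_mem hu hp], ?_⟩
    intro q hq hne
    rw [count_cons_of_ne hne, count_eq_one_of_mem hu]
    simpa [hne] using hq

end IsDoubledPart

end Multiset

namespace Glaisher

def toOdd (s : Multiset ℕ) : Multiset ℕ :=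
  s.bind fun q => Multiset.replicate (ordProj[2] q) (ordCompl[2] q)

def toDistinct (s : Multiset ℕ) : Multiset ℕ :=
  (s.toFinset.biUnion fun k => (s.count k).bitIndices.toFinset.image (2 ^ · * k)).val

theorem toOdd_cons (p : ℕ) (s : Multiset ℕ) :
    toOdd (p ::ₘ s) = Multiset.replicate (ordProj[2] p) (ordCompl[2] p) + toOdd s :=
  Multiset.cons_bind _ _ _

theorem sum_toOdd (s : Multiset ℕ) : (toOdd s).sum = s.sum := by
  simp [toOdd, Multiset.sum_bind, Nat.ordProj_mul_ordCompl_eq_self]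

theorem odd_of_mem_toOdd {s : Multiset ℕ} (hs : ∀ q ∈ s, 0 < q) {k : ℕ} (hk : k ∈ toOdd s) :
    Odd k := by
  obtain ⟨q, hq, hkq⟩ := Multiset.mem_bind.mp hk
  rw [Multiset.eq_of_mem_replicate hkq]
  exact Nat.odd_ordCompl_two (hs q hq).ne'

theorem testBit_count_toOdd {u : Multiset ℕ} (hu : u.Nodup) {k : ℕ} (hk : Odd k) (a : ℕ) :
    ((toOdd u).count k).testBit a ↔ 2 ^ a * k ∈ u := by
  classical
  set F : Finset ℕ := {q ∈ u.toFinset | ordCompl[2] q = k}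
  have hdecomp : ∀ q ∈ F, 2 ^ q.factorization 2 * k = q := by
    intro q hq
    rw [← (mem_filter.mp hq).2]
    exact Nat.ordProj_mul_ordCompl_eq_self q 2
  have hcount : (toOdd u).count k = ∑ b ∈ F.image (·.factorization 2), 2 ^ b := by
    rw [sum_image fun q hq r hr h => by rw [← hdecomp q hq, ← hdecomp r hr, h], sum_filter,
      toOdd, Multiset.count_bind, sum_eq_multiset_sum, Multiset.toFinset_val,
      Multiset.dedup_eq_self.mpr hu]
    simp [Multiset.count_replicate]
  rw [hcount, ← Nat.mem_bitIndices, ← List.mem_toFinset, toFinset_bitIndices_sum_two_pow, mem_image]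
  constructor
  · rintro ⟨q, hq, rfl⟩
    rw [hdecomp q hq]
    exact Multiset.mem_toFinset.mp (mem_filter.mp hq).1
  · intro h
    refine ⟨2 ^ a * k, mem_filter.mpr ⟨Multiset.mem_toFinset.mpr h, ?_⟩, ?_⟩
    · exact Nat.ordCompl_two_pow_mul_of_odd hk a
    · exact Nat.factorization_two_pow_mul_of_odd hk a

theorem nodup_toDistinct (s : Multiset ℕ) : (toDistinct s).Nodup :=
  Finset.nodup _

theorem mem_toDistinct {s : Multiset ℕ} {q : ℕ} :
    q ∈ toDistinct s ↔ ∃ k ∈ s, ∃ a, (s.count k).testBit a ∧ 2 ^ a * k = q := by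
  simp [toDistinct]

theorem pos_of_mem_toDistinct {s : Multiset ℕ} (hs : ∀ k ∈ s, 0 < k) {q : ℕ}
    (hq : q ∈ toDistinct s) : 0 < q := by
  obtain ⟨k, hk, a, -, rfl⟩ := mem_toDistinct.mp hq
  have := hs k hk
  positivity

theorem two_pow_mul_mem_toDistinct {s : Multiset ℕ} (hs : ∀ k ∈ s, Odd k) {k : ℕ} (hk : Odd k)
    (a : ℕ) : 2 ^ a * k ∈ toDistinct s ↔ (s.count k).testBit a := by
  rw [mem_toDistinct]
  constructor
  · rintro ⟨l, hl, b, hb, h⟩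
    obtain ⟨rfl, rfl⟩ := Nat.two_pow_mul_inj_of_odd (hs l hl) hk h
    exact hb
  · intro h
    refine ⟨k, ?_, a, h, rfl⟩
    rw [← Multiset.count_ne_zero]
    rintro h0
    simp [h0] at h

theorem toOdd_toDistinct {s : Multiset ℕ} (hs : ∀ k ∈ s, Odd k) : toOdd (toDistinct s) = s := by
  ext k
  by_cases hk : Odd k
  · exact Nat.eq_of_testBit_eq fun a => by
      rw [Bool.eq_iff_iff, testBit_count_toOdd (nodup_toDistinct s) hk,
        two_pow_mul_mem_toDistinct hs hk]
  · have hpos : ∀ q ∈ toDistinct s, 0 < q :=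
      fun q => pos_of_mem_toDistinct fun k hk => (hs k hk).pos
    rw [Multiset.count_eq_zero.mpr fun h => hk (odd_of_mem_toOdd hpos h),
      Multiset.count_eq_zero.mpr fun h => hk (hs k h)]

theorem sum_toDistinct {s : Multiset ℕ} (hs : ∀ k ∈ s, Odd k) : (toDistinct s).sum = s.sum := by
  rw [← sum_toOdd, toOdd_toDistinct hs]

theorem toDistinct_toOdd {u : Multiset ℕ} (hu : u.Nodup) (hpos : ∀ q ∈ u, 0 < q) :
    toDistinct (toOdd u) = u := by
  have hodd : ∀ k ∈ toOdd u, Odd k := fun k hk => odd_of_mem_toOdd hpos hk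
  refine (Multiset.Nodup.ext (nodup_toDistinct _) hu).mpr fun q => ?_
  constructor
  · intro hq
    obtain ⟨k, hk, a, ha, rfl⟩ := mem_toDistinct.mp hq
    exact (testBit_count_toOdd hu (hodd k hk) a).mp ha
  · intro hq
    have hq0 : q ≠ 0 := (hpos q hq).ne'
    have hk := Nat.odd_ordCompl_two hq0
    rw [← Nat.ordProj_mul_ordCompl_eq_self q 2, two_pow_mul_mem_toDistinct hodd hk,
      testBit_count_toOdd hu hk, Nat.ordProj_mul_ordCompl_eq_self]
    exact hq

def doubleAt (s : Multiset ℕ) (i j : ℕ) : Multiset ℕ :=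
  2 ^ j * i ::ₘ toDistinct (s - Multiset.replicate (2 ^ j) i)

section doubleAt

variable {s : Multiset ℕ} (hs : ∀ k ∈ s, Odd k) {i j : ℕ}
include hs

theorem odd_of_mem_sub (n : ℕ) : ∀ k ∈ s - Multiset.replicate n i, Odd k :=
  fun k hk => hs k (Multiset.mem_of_le (Multiset.sub_le_self _ _) hk)

theorem odd_of_two_pow_le_count (hj : 2 ^ j ≤ s.count i) : Odd i :=
  hs i (Multiset.count_pos.mp (lt_of_lt_of_le (Nat.two_pow_pos j) hj))

theorem toOdd_doubleAt (hj : 2 ^ j ≤ s.count i) : toOdd (doubleAt s i j) = s := by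
  have hi := odd_of_two_pow_le_count hs hj
  rw [doubleAt, toOdd_cons, Nat.ordCompl_two_pow_mul_of_odd hi,
    Nat.factorization_two_pow_mul_of_odd hi, toOdd_toDistinct (odd_of_mem_sub hs _)]
  exact add_tsub_cancel_of_le (Multiset.le_count_iff_replicate_le.mp hj)

theorem isDoubledPart_doubleAt (hj : j ∈ (s.count i).zeroBits) :
    Multiset.IsDoubledPart (doubleAt s i j) (2 ^ j * i) := by
  obtain ⟨hle, hbit⟩ := Nat.mem_zeroBits_iff.mp hj
  have hi := odd_of_two_pow_le_count hs hle
  refine ⟨_, nodup_toDistinct _, ?_, rfl⟩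
  rw [two_pow_mul_mem_toDistinct (odd_of_mem_sub hs _) hi, Multiset.count_sub,
    Multiset.count_replicate_self]
  exact hbit

theorem pos_of_mem_doubleAt (hj : 2 ^ j ≤ s.count i) {q : ℕ} (hq : q ∈ doubleAt s i j) :
    0 < q := by
  rcases Multiset.mem_cons.mp hq with rfl | hq
  · have := (odd_of_two_pow_le_count hs hj).pos
    positivity
  · exact pos_of_mem_toDistinct (fun k hk => (odd_of_mem_sub hs _ k hk).pos) hq

theorem sum_doubleAt (hj : 2 ^ j ≤ s.count i) : (doubleAt s i j).sum = s.sum := by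
  rw [← sum_toOdd, toOdd_doubleAt hs hj]

end doubleAt

theorem eq_of_doubleAt_eq {s s' : Multiset ℕ} (hs : ∀ k ∈ s, Odd k) (hs' : ∀ k ∈ s', Odd k)
    {i i' j j' : ℕ} (hj : j ∈ (s.count i).zeroBits) (hj' : j' ∈ (s'.count i').zeroBits)
    (h : doubleAt s i j = doubleAt s' i' j') : s = s' ∧ i = i' ∧ j = j' := by
  have hle := (Nat.mem_zeroBits_iff.mp hj).1
  have hle' := (Nat.mem_zeroBits_iff.mp hj').1
  have hp : 2 ^ j * i = 2 ^ j' * i' :=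
    (isDoubledPart_doubleAt hs hj).unique (h ▸ isDoubledPart_doubleAt hs' hj')
  obtain ⟨rfl, rfl⟩ := Nat.two_pow_mul_inj_of_odd (odd_of_two_pow_le_count hs hle)
    (odd_of_two_pow_le_count hs' hle') hp
  exact ⟨by rw [← toOdd_doubleAt hs hle, h, toOdd_doubleAt hs' hle'], rfl, rfl⟩

theorem doubleAt_toOdd_cons {u : Multiset ℕ} (hu : u.Nodup) (hpos : ∀ q ∈ u, 0 < q) {p : ℕ}
    (hp : p ∈ u) :
    p.factorization 2 ∈ ((toOdd (p ::ₘ u)).count (ordCompl[2] p)).zeroBits ∧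
      doubleAt (toOdd (p ::ₘ u)) (ordCompl[2] p) (p.factorization 2) = p ::ₘ u := by
  have hk : Odd (ordCompl[2] p) := Nat.odd_ordCompl_two (hpos p hp).ne'
  rw [toOdd_cons, Multiset.count_add, Multiset.count_replicate_self, Nat.mem_zeroBits_iff,
    Nat.add_sub_cancel_left, testBit_count_toOdd hu hk, Nat.ordProj_mul_ordCompl_eq_self, doubleAt,
    add_tsub_cancel_left, toDistinct_toOdd hu hpos, Nat.ordProj_mul_ordCompl_eq_self]
  exact ⟨⟨Nat.le_add_right _ _, hp⟩, rfl⟩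

end Glaisher

open Glaisher

namespace Nat.Partition

variable {n : ℕ}

def toOdd (P : n.Partition) : n.Partition where
  parts := Glaisher.toOdd P.parts
  parts_pos hq := (odd_of_mem_toOdd (fun _ => P.parts_pos) hq).pos
  parts_sum := by rw [sum_toOdd, P.parts_sum]

def doubleAt (P : n.Partition) (hP : ∀ q ∈ P.parts, Odd q) {i j : ℕ}
    (hj : 2 ^ j ≤ P.parts.count i) : n.Partition where
  parts := Glaisher.doubleAt P.parts i j
  parts_pos := pos_of_mem_doubleAt hP hj
  parts_sum := by rw [sum_doubleAt hP hj, P.parts_sum]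

theorem mem_odds_iff {P : n.Partition} : P ∈ odds n ↔ ∀ q ∈ P.parts, Odd q := by
  simp [odds, restricted]

def zeroDigitTriples (n : ℕ) : Finset (Σ _ : n.Partition, Σ _ : ℕ, ℕ) :=
  (odds n).sigma fun P => P.parts.toFinset.sigma fun i => (P.parts.count i).zeroBits

theorem card_zeroDigitTriples (n : ℕ) : #(zeroDigitTriples n) =
    ∑ P ∈ odds n, ∑ i ∈ P.parts.toFinset, (Nat.digits 2 (P.parts.count i)).count 0 := by
  simp only [zeroDigitTriples, Finset.card_sigma, Nat.card_zeroBits]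

theorem mem_zeroDigitTriples {x : Σ _ : n.Partition, Σ _ : ℕ, ℕ} :
    x ∈ zeroDigitTriples n ↔
      (∀ q ∈ x.1.parts, Odd q) ∧ x.2.2 ∈ (x.1.parts.count x.2.1).zeroBits := by
  rw [zeroDigitTriples, mem_sigma, mem_sigma, mem_odds_iff, Multiset.mem_toFinset]
  refine and_congr_right fun _ => and_iff_right_of_imp fun hj => ?_
  exact Multiset.count_pos.mp (lt_of_lt_of_le (Nat.two_pow_pos _) (Nat.mem_zeroBits_iff.mp hj).1)

open Classical in
theorem card_zeroDigitTriples_eq_card_isDoubledPart :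
    #(zeroDigitTriples n) = #{P : n.Partition | ∃ p, P.parts.IsDoubledPart p} := by
  refine card_bij (fun x hx => (x.1.doubleAt (mem_zeroDigitTriples.mp hx).1
    (Nat.mem_zeroBits_iff.mp (mem_zeroDigitTriples.mp hx).2).1)) ?_ ?_ ?_
  · intro x hx
    exact mem_filter.mpr ⟨mem_univ _, _, isDoubledPart_doubleAt (mem_zeroDigitTriples.mp hx).1
      (mem_zeroDigitTriples.mp hx).2⟩
  · rintro ⟨P, i, j⟩ hx ⟨P', i', j'⟩ hx' h
    obtain ⟨hP, hj⟩ := mem_zeroDigitTriples.mp hx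
    obtain ⟨hP', hj'⟩ := mem_zeroDigitTriples.mp hx'
    obtain ⟨hPP', rfl, rfl⟩ := eq_of_doubleAt_eq hP hP' hj hj' (congrArg parts h)
    obtain rfl := Nat.Partition.ext hPP'
    rfl
  · intro b hb
    obtain ⟨p, u, hu, hp, hb⟩ := (mem_filter.mp hb).2
    have hpos : ∀ q ∈ u, 0 < q := fun q hq => b.parts_pos (hb ▸ Multiset.mem_cons_of_mem hq)
    obtain ⟨hj, hdouble⟩ := doubleAt_toOdd_cons hu hpos hp
    refine ⟨⟨b.toOdd, ordCompl[2] p, p.factorization 2⟩, ?_, Nat.Partition.ext ?_⟩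
    · refine mem_zeroDigitTriples.mpr ⟨fun q hq => odd_of_mem_toOdd (fun _ => b.parts_pos) hq, ?_⟩
      simpa [toOdd, hb] using hj
    · simpa [toOdd, doubleAt, hb] using hdouble

end Nat.Partition

theorem c2_eq_b2_general (n : ℕ) :
    (Finset.univ.filter (fun P : n.Partition =>
        ∃ p ∈ P.parts.toFinset, P.parts.count p = 2 ∧
          ∀ q ∈ P.parts.toFinset, q ≠ p → P.parts.count q = 1)).card =
      ∑ P ∈ Nat.Partition.odds n,
        ∑ i ∈ P.parts.toFinset, (Nat.digits 2 (P.parts.count i)).count 0 := by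
  classical
  rw [← Nat.Partition.card_zeroDigitTriples,
    Nat.Partition.card_zeroDigitTriples_eq_card_isDoubledPart]
  exact congrArg card (filter_congr fun P _ => Multiset.exists_isDoubledPart_iff)

theorem c2_eq_b2 (n : ℕ) (hn : 0 < n) :
    (Finset.univ.filter (fun P : n.Partition =>
        ∃ p ∈ P.parts.toFinset, P.parts.count p = 2 ∧
          ∀ q ∈ P.parts.toFinset, q ≠ p → P.parts.count q = 1)).card =
      ∑ P ∈ Nat.Partition.odds n,
        ∑ i ∈ P.parts.toFinset, (Nat.digits 2 (P.parts.count i)).count 0 :=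
  c2_eq_b2_general n
end
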